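/- arXiv:2106.01969 — 2 statements merged into one kernel-verified Lean document; each statement's English description precedes it below -/
import Mathlib

section
/- Let f : ℝᵈ → ℝ be β-smooth (∇f is β-Lipschitz) and let C be a nonempty closed convex set. Fix x ∈ C and let x⁺ = P_C(x + (1/β)∇f(x)), with G = β(x⁺ − x). If ‖G‖₂ ≤ ε, then for every δ with x⁺ + δ ∈ C and ‖δ‖₂ ≤ 1, it holds that δᵀ∇f(x⁺) ≤ 2ε. -/
/-!
The projection step gives the variational inequality `⟪x + β⁻¹ ∇f(x) - x⁺, δ⟫ ≤ 0` for every
feasible direction `δ` at `x⁺`, i.e. `⟪∇f(x), δ⟫ ≤ ⟪G, δ⟫ ≤ ε`. Moving the gradient from `x`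
to `x⁺` costs at most `β‖x⁺ - x‖ = ‖G‖ ≤ ε` more, by `β`-smoothness.
-/

open scoped InnerProductSpace

variable {E : Type*} [NormedAddCommGroup E] [InnerProductSpace ℝ E]

theorem real_inner_sub_nonpos_of_forall_dist_le {C : Set E} (hC : Convex ℝ C) {u p : E}
    (hp : p ∈ C) (hmin : ∀ z ∈ C, dist u p ≤ dist u z) {z : E} (hz : z ∈ C) :
    ⟪u - p, z - p⟫_ℝ ≤ 0 := by
  have : Nonempty C := ⟨⟨p, hp⟩⟩
  have hinf : ‖u - p‖ = ⨅ w : C, ‖u - w‖ := by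
    have hbdd : BddBelow (Set.range fun w : C => ‖u - w‖) :=
      ⟨0, by rintro _ ⟨w, rfl⟩; exact norm_nonneg _⟩
    refine le_antisymm (le_ciInf fun w => ?_) (ciInf_le hbdd ⟨p, hp⟩)
    simpa only [dist_eq_norm] using hmin w w.2
  exact (norm_eq_iInf_iff_real_inner_le_zero hC hp).mp hinf z hz

theorem real_inner_le_real_inner_gradientMapping {C : Set E} (hC : Convex ℝ C) {β : ℝ}
    (hβ : 0 < β) {x p v δ : E} (hp : p ∈ C)
    (hproj : ∀ z ∈ C, dist (x + (1 / β) • v) p ≤ dist (x + (1 / β) • v) z)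
    (hδ : p + δ ∈ C) : ⟪v, δ⟫_ℝ ≤ ⟪β • (p - x), δ⟫_ℝ := by
  have hvi : ⟪x + (1 / β) • v - p, δ⟫_ℝ ≤ 0 := by
    simpa only [add_sub_cancel_left] using real_inner_sub_nonpos_of_forall_dist_le hC hp hproj hδ
  have hsplit : v - β • (p - x) = β • (x + (1 / β) • v - p) := by
    rw [smul_sub β (x + (1 / β) • v), smul_add, smul_smul, mul_one_div_cancel hβ.ne', one_smul,
      smul_sub]
    abel
  have : ⟪v - β • (p - x), δ⟫_ℝ ≤ 0 := by
    rw [hsplit, real_inner_smul_left]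
    exact mul_nonpos_of_nonneg_of_nonpos hβ.le hvi
  rwa [inner_sub_left, sub_nonpos] at this

theorem real_inner_le_norm_of_norm_le_one (v : E) {δ : E} (hδ : ‖δ‖ ≤ 1) : ⟪v, δ⟫_ℝ ≤ ‖v‖ :=
  (real_inner_le_norm v δ).trans (mul_le_of_le_one_right (norm_nonneg v) hδ)

theorem small_gradient_mapping_implies_stationary_general {d : ℕ}
    (C : Set (EuclideanSpace ℝ (Fin d)))
    (hCcv : Convex ℝ C)
    (g : EuclideanSpace ℝ (Fin d) → EuclideanSpace ℝ (Fin d))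
    (β : ℝ) (hβ : 0 < β)
    (hLip : ∀ x y, ‖g x - g y‖ ≤ β * ‖x - y‖)
    (x xplus : EuclideanSpace ℝ (Fin d))
    (hxplusC : xplus ∈ C)
    (hproj : ∀ z ∈ C, dist (x + (1/β) • g x) xplus ≤ dist (x + (1/β) • g x) z)
    (ε : ℝ) (hε : ‖β • (xplus - x)‖ ≤ ε) :
    ∀ δ : EuclideanSpace ℝ (Fin d), xplus + δ ∈ C → ‖δ‖ ≤ 1 →
      (inner ℝ δ (g xplus) : ℝ) ≤ 2 * ε := by
  intro δ hδC hδ1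
  have hdrift : ‖g xplus - g x‖ ≤ ε := by
    calc ‖g xplus - g x‖ ≤ β * ‖xplus - x‖ := hLip _ _
      _ = ‖β • (xplus - x)‖ := by rw [norm_smul, Real.norm_of_nonneg hβ.le]
      _ ≤ ε := hε
  calc ⟪δ, g xplus⟫_ℝ = ⟪g x, δ⟫_ℝ + ⟪g xplus - g x, δ⟫_ℝ := by
        rw [inner_sub_left, real_inner_comm]; ring
    _ ≤ ‖β • (xplus - x)‖ + ‖g xplus - g x‖ :=
        add_le_add
          ((real_inner_le_real_inner_gradientMapping hCcv hβ hxplusC hproj hδC).trans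
            (real_inner_le_norm_of_norm_le_one _ hδ1))
          (real_inner_le_norm_of_norm_le_one _ hδ1)
    _ ≤ 2 * ε := by linarith

/-- If the gradient mapping `G = β(x⁺ − x)` of a projected gradient step on a globally
`β`-smooth `f` has norm at most `ε`, then `x⁺` is an approximate first-order stationary
point of `f` over `C`: every feasible direction `δ` of norm at most 1 satisfies
`⟪δ, ∇f(x⁺)⟫ ≤ 2ε`. -/
theorem small_gradient_mapping_implies_stationary {d : ℕ}
    (C : Set (EuclideanSpace ℝ (Fin d)))
    (hCne : C.Nonempty) (hCcl : IsClosed C) (hCcv : Convex ℝ C)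
    (f : EuclideanSpace ℝ (Fin d) → ℝ) (g : EuclideanSpace ℝ (Fin d) → EuclideanSpace ℝ (Fin d))
    (hgrad : ∀ x, HasGradientAt f (g x) x)
    (β : ℝ) (hβ : 0 < β)
    (hLip : ∀ x y, ‖g x - g y‖ ≤ β * ‖x - y‖)
    (x xplus : EuclideanSpace ℝ (Fin d)) (hx : x ∈ C)
    (hxplusC : xplus ∈ C)
    (hproj : ∀ z ∈ C, dist (x + (1/β) • g x) xplus ≤ dist (x + (1/β) • g x) z)
    (ε : ℝ) (hε : ‖β • (xplus - x)‖ ≤ ε) :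
    ∀ δ : EuclideanSpace ℝ (Fin d), xplus + δ ∈ C → ‖δ‖ ≤ 1 →
      (inner ℝ δ (g xplus) : ℝ) ≤ 2 * ε :=
  small_gradient_mapping_implies_stationary_general C hCcv g β hβ hLip x xplus hxplusC hproj ε hε
end

section
/- Consider the two-player, two-state Markov game on states {0,1} where each player has actions {0,1} at each state, rewards are constant in actions: R_A(0,·) = 2, R_B(0,·) = 0, R_A(1,·) = 0, R_B(1,·) = 2, transitions are deterministic with s_{t+1} = s_t XOR a_A XOR a_B, and payoffs are discounted with factor γ ∈ (0,1). Then this Markov game admits no Nash policy profile in which both players use deterministic stationary policies. -/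
/-- State transition of the matching-pennies-over-states Markov game:
`s_{t+1} = s_t XOR a_A XOR a_B`, where the players use deterministic stationary
policies `pA pB : Bool → Bool` (state `false` is state 0, `true` is state 1). -/
def mpStep (pA pB : Bool → Bool) (s : Bool) : Bool :=
  xor s (xor (pA s) (pB s))

/-- Reward of player A: `2` at state 0, `0` at state 1 (constant in actions). -/
def mpRA (s : Bool) : ℝ := if s then 0 else 2

/-- Reward of player B: `0` at state 0, `2` at state 1 (constant in actions). -/
def mpRB (s : Bool) : ℝ := if s then 2 else 0

/-- Discounted value of a player with reward `R` starting from state `s` when the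
players follow deterministic stationary policies `pA, pB`. -/
noncomputable def mpVal (γ : ℝ) (R : Bool → ℝ) (pA pB : Bool → Bool) (s : Bool) : ℝ :=
  ∑' t : ℕ, γ ^ t * R ((mpStep pA pB)^[t] s)

lemma mp_summable {γ : ℝ} (hγ0 : 0 < γ) (hγ1 : γ < 1) (R : Bool → ℝ)
    (hR0 : ∀ s, 0 ≤ R s) (hR2 : ∀ s, R s ≤ 2) (o : ℕ → Bool) :
    Summable (fun t : ℕ => γ ^ t * R (o t)) := by
  apply Summable.of_nonneg_of_le (fun t => mul_nonneg (pow_nonneg hγ0.le t) (hR0 (o t)))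
    (fun t => by nlinarith [pow_nonneg hγ0.le t, hR2 (o t), hR0 (o t)])
    ((summable_geometric_of_lt_one hγ0.le hγ1).mul_right 2)


/-- The Markov game with constant state-rewards `(2,0)` and `(0,2)` and transitions
`s_{t+1} = s_t XOR a_A XOR a_B` admits no Nash policy profile in which both players
use deterministic stationary policies: for every deterministic profile some player has
a profitable (deterministic) deviation from some starting state. -/
theorem no_deterministic_nash (γ : ℝ) (hγ0 : 0 < γ) (hγ1 : γ < 1) :
    ¬ ∃ pA pB : Bool → Bool,
      (∀ (pA' : Bool → Bool) (s : Bool), mpVal γ mpRA pA' pB s ≤ mpVal γ mpRA pA pB s) ∧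
      (∀ (pB' : Bool → Bool) (s : Bool), mpVal γ mpRB pA pB' s ≤ mpVal γ mpRB pA pB s) := by
  rintro ⟨pA, pB, hA, hB⟩
  have hRA0 : ∀ s, (0:ℝ) ≤ mpRA s := by intro s; cases s <;> norm_num [mpRA]
  have hRA2 : ∀ s, mpRA s ≤ 2 := by intro s; cases s <;> norm_num [mpRA]
  have hRB0 : ∀ s, (0:ℝ) ≤ mpRB s := by intro s; cases s <;> norm_num [mpRB]
  have hRB2 : ∀ s, mpRB s ≤ 2 := by intro s; cases s <;> norm_num [mpRB]
  by_cases h : mpStep pA pB false = false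
  · -- state 0 absorbing; B deviates
    set pB' : Bool → Bool := fun s => xor (pA s) (!s) with hpB'
    have hstep' : ∀ s, mpStep pA pB' s = true := by
      intro s; cases s <;> cases hx : pA false <;> cases hy : pA true <;>
        simp [mpStep, pB', hx, hy]
    have horb : ∀ t, (mpStep pA pB)^[t] false = false :=
      fun t => Function.iterate_fixed h t
    have horb1 : (mpStep pA pB')^[1] false = true := by
      simpa using hstep' false
    have hold : mpVal γ mpRB pA pB false = 0 := by
      unfold mpVal
      have : ∀ t : ℕ, γ ^ t * mpRB ((mpStep pA pB)^[t] false) = 0 := by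
        intro t; rw [horb t]; simp [mpRB]
      simp only [this, tsum_zero]
    have hnew : 0 < mpVal γ mpRB pA pB' false := by
      unfold mpVal
      refine Summable.tsum_pos (mp_summable hγ0 hγ1 mpRB hRB0 hRB2 _)
        (fun t => mul_nonneg (pow_nonneg hγ0.le t) (hRB0 _)) 1 ?_
      rw [horb1]
      simp [mpRB]
      positivity
    have := hB pB' false
    linarith
  · -- step from state 0 goes to state 1; A deviates to pB (making every state fixed)
    simp only [Bool.not_eq_false] at h
    have hstep' : ∀ s, mpStep pB pB s = s := by
      intro s; simp [mpStep]
    have horb' : ∀ t, (mpStep pB pB)^[t] false = false :=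
      fun t => Function.iterate_fixed (hstep' false) t
    have hnew : mpVal γ mpRA pB pB false = ∑' t : ℕ, γ ^ t * 2 := by
      unfold mpVal
      congr 1; funext t; rw [horb' t]; norm_num [mpRA]
    have horb1 : (mpStep pA pB)^[1] false = true := by simpa using h
    have hle : (fun t : ℕ => γ ^ t * mpRA ((mpStep pA pB)^[t] false)) ≤
        (fun t : ℕ => γ ^ t * 2) := by
      intro t
      have := hRA2 ((mpStep pA pB)^[t] false)
      have := pow_nonneg hγ0.le t
      simp only
      nlinarith
    have h1 : γ ^ 1 * mpRA ((mpStep pA pB)^[1] false) < γ ^ 1 * 2 := by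
      rw [horb1]
      simp [mpRA]
      positivity
    have hlt : mpVal γ mpRA pA pB false < ∑' t : ℕ, γ ^ t * 2 := by
      unfold mpVal
      exact Summable.tsum_lt_tsum hle h1 (mp_summable hγ0 hγ1 mpRA hRA0 hRA2 _)
        ((summable_geometric_of_lt_one hγ0.le hγ1).mul_right 2)
    have := hA pB false
    rw [hnew] at this
    linarith
end
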